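/- There exists a constant C > 0 such that for every n ≥ 2 and every loopless 𝔽₂-representable matroid M of rank n, there exist a nonempty finite index set I and maps f_i from the ground set of M to Fin n, for i ∈ I, such that: (i) for every i ∈ I and every set S of elements of M, the number of distinct values of f_i on S is at most the rank of S in M; and (ii) for every set S of elements of M, the average (1/|I|)·Σ_{i ∈ I} (number of distinct values of f_i on S) is at least (log₂ n / (C·n)) · rank_M(S). In other words, every loopless binary matroid of rank n admits an O(n/log n)-approximate randomized embedding into the free matroid on n elements. -/

import Mathlib

/-!
Represent `M` by vectors `ψ x ∈ 𝔽₂^m` and set `t = ⌊log₂ n⌋`. For a matrix `L : 𝔽₂^{t×m}`, send `x`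
to the position of the top nonzero coordinate of `L ψ x`. Elements with distinct positions have
images in echelon form, hence are independent, so no map exceeds the rank. Conversely, if `I` is
a basis of `S` with `r` elements, then as `L` ranges over all matrices the vectors `L ψ x`
(`x ∈ I`) range uniformly over `(𝔽₂^t)^r`. Each of the top `⌊log₂ r⌋` positions is then hit with
probability at least `1/2`, giving on average `≳ log r ≳ r log n / n` distinct values.
-/

open Set

/-- The rank of a set in a matroid: the supremum of the cardinalities of its
independent subsets. -/
noncomputable def mRank {α : Type*} (M : Matroid α) (S : Set α) : ℕ∞ :=
  ⨆ I ∈ {I : Set α | M.Indep I ∧ I ⊆ S}, I.encard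

/-- The rank of a set of vectors: the dimension of its linear span. -/
noncomputable def spanRank (K : Type*) [Field K] {W : Type*} [AddCommGroup W] [Module K W]
    (S : Set W) : ℕ :=
  Module.finrank K (Submodule.span K S)

/-- A matroid is representable over a field `K` if independence coincides with
`K`-linear independence of an assignment of vectors to the elements. -/
def RepOver (K : Type*) [Field K] {α : Type*} (M : Matroid α) : Prop :=
  ∃ (ι : Type) (f : α → ι → K), ∀ I : Set α,
    M.Indep I ↔ I ⊆ M.E ∧ LinearIndependent K (fun x : I => f (x : α))

open Finset Matrix

lemma mRank_eq_eRk {α : Type*} (M : Matroid α) (S : Set α) : mRank M S = M.eRk S := by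
  refine le_antisymm (iSup₂_le fun I hI => hI.1.encard_le_eRk_of_subset hI.2) ?_
  obtain ⟨I, hI⟩ := M.exists_isBasis' S
  rw [← hI.encard_eq_eRk]
  exact le_iSup₂ (f := fun I (_ : I ∈ {I | M.Indep I ∧ I ⊆ S}) => I.encard) I ⟨hI.indep, hI.subset⟩

theorem RepOver.exists_fin_rep {K α : Type*} [Field K] {M : Matroid α} [M.RankFinite]
    (hM : RepOver K M) :
    ∃ (m : ℕ) (ψ : α → Fin m → K), ∀ I ⊆ M.E, M.Indep I ↔ LinearIndepOn K ψ I := by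
  obtain ⟨ι, φ, hφ⟩ := hM
  obtain ⟨B, hB⟩ := M.exists_isBase
  set W := Submodule.span K (φ '' B)
  have hφE : ∀ x ∈ M.E, φ x ∈ W := by
    intro x hx
    by_contra hxW
    have hxB : x ∉ B := fun hxB => hxW (Submodule.subset_span (mem_image_of_mem φ hxB))
    refine (hB.insert_dep ⟨hx, hxB⟩).not_indep ((hφ _).2 ⟨insert_subset hx hB.subset_ground, ?_⟩)
    exact (linearIndepOn_insert hxB).2 ⟨((hφ B).1 hB.indep).2, hxW⟩
  have : FiniteDimensional K W := FiniteDimensional.span_of_finite K (hB.finite.image φ)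
  obtain ⟨P, hP⟩ := LinearMap.exists_extend (Module.finBasis K W).equivFun.toLinearMap
  refine ⟨_, P ∘ φ, fun I hI => ?_⟩
  have hPinj : InjOn P W := fun v hv w hw hvw => by
    have h := LinearMap.congr_fun hP
    exact congrArg Subtype.val ((Module.finBasis K W).equivFun.injective
      ((h ⟨v, hv⟩).symm.trans (hvw.trans (h ⟨w, hw⟩))))
  rw [hφ, P.linearIndepOn_iff_of_injOn (hPinj.mono (Submodule.span_le.2 ?_))]
  · exact and_iff_right hI
  · rintro _ ⟨x, hx, rfl⟩; exact hφE x (hI hx)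

theorem AddMonoidHom.sum_comp_eq_card_ker_mul {A B : Type*} [AddGroup A] [Fintype A] [AddMonoid B]
    [Fintype B] [DecidableEq B] {T : A →+ B} (hT : Function.Surjective T) (g : B → ℕ) :
    ∑ a, g (T a) = #{a | T a = 0} * ∑ b, g b := by
  rw [← sum_fiberwise' univ T g, mul_sum]
  refine sum_congr rfl fun b _ => ?_
  rw [sum_const, smul_eq_mul, AddMonoidHom.card_fiber_eq_of_mem_range T (hT b) (hT 0)]

theorem AddMonoidHom.sum_comp_mul_card_eq {A B : Type*} [AddGroup A] [Fintype A] [AddMonoid B]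
    [Fintype B] [DecidableEq B] {T : A →+ B} (hT : Function.Surjective T) (g : B → ℕ) :
    (∑ a, g (T a)) * Fintype.card B = Fintype.card A * ∑ b, g b := by
  have hA := sum_comp_eq_card_ker_mul hT fun _ => 1
  simp only [sum_const, card_univ, smul_eq_mul, mul_one] at hA
  rw [sum_comp_eq_card_ker_mul hT, hA]
  ring

theorem Matrix.mulVec_surjective_of_linearIndependent {K ι : Type*} [Field K] {m t : ℕ}
    {v : ι → Fin m → K} (hv : LinearIndependent K v) :
    Function.Surjective fun (L : Matrix (Fin t) (Fin m) K) i => L *ᵥ v i := by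
  intro w
  obtain ⟨g, hg⟩ := LinearMap.exists_extend ((Module.Basis.span hv).constr K w)
  refine ⟨LinearMap.toMatrix' g, funext fun i => ?_⟩
  have := LinearMap.congr_fun hg (Module.Basis.span hv i)
  rw [Module.Basis.constr_basis, LinearMap.comp_apply, Submodule.subtype_apply,
    Module.Basis.span_apply] at this
  exact (LinearMap.toMatrix'_mulVec g (v i)).trans this

lemma two_mul_pow_le_succ_pow {p r : ℕ} (h : p < r) : 2 * p ^ r ≤ (p + 1) ^ r := by
  have hb := pow_add_mul_le_add_pow (a := p) (b := 1) (Nat.zero_le _) (by omega) r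
  have hp : p ^ r = p * p ^ (r - 1) := by rw [← pow_succ', Nat.sub_add_cancel (by omega)]
  have := Nat.mul_le_mul_right (p ^ (r - 1)) h.le
  simp only [Nat.cast_id, mul_one] at hb
  omega

lemma Nat.log_mul_le_mul_max_one_log {n r : ℕ} (hr : 1 ≤ r) (hrn : r ≤ n) :
    Nat.log 2 n * r ≤ 2 * n * max 1 (Nat.log 2 r) := by
  set t := Nat.log 2 n
  set a := Nat.log 2 r
  have hat : a ≤ t := Nat.log_mono_right hrn
  have hra : r < 2 ^ (a + 1) := Nat.lt_pow_succ_log_self one_lt_two r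
  have htn : 2 ^ t ≤ n := Nat.pow_log_le_self 2 (by omega)
  have hsplit : 2 ^ t = 2 ^ a * 2 ^ (t - a) := by rw [← pow_add, Nat.add_sub_cancel' hat]
  have ht : t ≤ max 1 a * 2 ^ (t - a) :=
    calc t = a + (t - a) := by omega
      _ ≤ max 1 a * (t - a + 1) := by nlinarith [le_max_left 1 a, le_max_right 1 a]
      _ ≤ max 1 a * 2 ^ (t - a) := Nat.mul_le_mul_left _ Nat.lt_two_pow_self
  calc t * r ≤ t * 2 ^ (a + 1) := Nat.mul_le_mul_left _ hra.le
    _ ≤ max 1 a * 2 ^ (t - a) * 2 ^ (a + 1) := Nat.mul_le_mul_right _ ht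
    _ = 2 * 2 ^ t * max 1 a := by rw [hsplit, pow_succ]; ring
    _ ≤ 2 * n * max 1 a := by gcongr

lemma logb_div_mul_le_div {n r k s : ℕ} (hn : 2 ≤ n) (hr : 1 ≤ r) (hrn : r ≤ n) (hk : 0 < k)
    (h : k * max 1 (Nat.log 2 r) ≤ 2 * s) : Real.logb 2 n / (8 * n) * r ≤ s / k := by
  set b := max 1 (Nat.log 2 r)
  have hlogb : Real.logb 2 n ≤ 2 * Nat.log 2 n := by
    have h1 := Nat.lt_floor_add_one (Real.logb 2 n)
    rw [← Nat.cast_ofNat, Real.natFloor_logb_natCast, Nat.cast_ofNat] at h1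
    have h2 : (1 : ℝ) ≤ Nat.log 2 n := by exact_mod_cast Nat.log_pos one_lt_two hn
    linarith
  have h1 : (Nat.log 2 n * r : ℝ) ≤ 2 * n * b := by
    exact_mod_cast Nat.log_mul_le_mul_max_one_log hr hrn
  have h2 : (k * b : ℝ) ≤ 2 * s := by exact_mod_cast h
  rw [div_mul_eq_mul_div, div_le_div_iff₀ (by positivity) (by positivity)]
  calc Real.logb 2 n * r * k ≤ 2 * Nat.log 2 n * r * k := by gcongr
    _ = 2 * (Nat.log 2 n * r) * k := by ring
    _ ≤ 2 * (2 * n * b) * k := by gcongr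
    _ = 4 * n * (k * b) := by ring
    _ ≤ 4 * n * (2 * s) := by gcongr
    _ = s * (8 * n) := by ring

section TopBit

variable {t : ℕ}

def binVal (w : Fin t → ZMod 2) : ℕ := ∑ i, (w i).val * 2 ^ (i : ℕ)

lemma binVal_eq_finFunctionFinEquiv (w : Fin t → ZMod 2) :
    binVal w = finFunctionFinEquiv (m := 2) w := rfl

lemma binVal_lt (w : Fin t → ZMod 2) : binVal w < 2 ^ t := (finFunctionFinEquiv (m := 2) w).isLt

lemma val_apply_eq_binVal_div_mod (w : Fin t → ZMod 2) (i : Fin t) :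
    (w i).val = binVal w / 2 ^ (i : ℕ) % 2 := by
  conv_lhs => rw [← (finFunctionFinEquiv (m := 2)).symm_apply_apply w]
  exact finFunctionFinEquiv_symm_apply_val _ _

lemma binVal_eq_zero_iff {w : Fin t → ZMod 2} : binVal w = 0 ↔ w = 0 := by
  refine ⟨fun h => funext fun i => ?_, fun h => by simp [h, binVal]⟩
  rw [Pi.zero_apply, ← ZMod.val_eq_zero, val_apply_eq_binVal_div_mod, h, Nat.zero_div,
    Nat.zero_mod]

def topBit (w : Fin t → ZMod 2) : ℕ := Nat.log 2 (binVal w)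

lemma topBit_lt_two_pow (w : Fin t → ZMod 2) : topBit w < 2 ^ t :=
  (Nat.log_le_self 2 _).trans_lt (binVal_lt w)

lemma topBit_lt {w : Fin t → ZMod 2} (hw : w ≠ 0) : topBit w < t :=
  Nat.log_lt_of_lt_pow (mt binVal_eq_zero_iff.1 hw) (binVal_lt w)

lemma apply_topBit_ne_zero {w : Fin t → ZMod 2} (hw : w ≠ 0) : w ⟨topBit w, topBit_lt hw⟩ ≠ 0 := by
  have h0 : binVal w ≠ 0 := mt binVal_eq_zero_iff.1 hw
  have h1 : binVal w / 2 ^ Nat.log 2 (binVal w) = 1 := Nat.div_eq_of_lt_le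
    (by simpa using Nat.pow_log_le_self 2 h0)
    (by have := Nat.lt_pow_succ_log_self one_lt_two (binVal w); rw [pow_succ] at this; omega)
  rw [Ne, ← ZMod.val_eq_zero, val_apply_eq_binVal_div_mod]
  simp [topBit, h1]

lemma apply_eq_zero_of_topBit_lt {w : Fin t → ZMod 2} {i : Fin t} (h : topBit w < i) : w i = 0 := by
  rw [← ZMod.val_eq_zero, val_apply_eq_binVal_div_mod, Nat.div_eq_of_lt, Nat.zero_mod]
  exact (Nat.lt_pow_succ_log_self one_lt_two _).trans_le (Nat.pow_le_pow_right two_pos h)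

@[simp] lemma topBit_zero : topBit (0 : Fin t → ZMod 2) = 0 := by simp [topBit, binVal]

theorem linearIndepOn_of_injOn_topBit {γ V : Type*} [AddCommGroup V] [Module (ZMod 2) V]
    (L : V →ₗ[ZMod 2] Fin t → ZMod 2) {u : γ → V} {s : Set γ} (hfin : s.Finite)
    (hu : ∀ x ∈ s, u x ≠ 0) (hs : InjOn (fun x => topBit (L (u x))) s) :
    LinearIndepOn (ZMod 2) u s := by
  classical
  lift s to Finset γ using hfin
  induction s using Finset.induction_on_max_value (fun x => topBit (L (u x))) with
  | empty => simp
  | insert a s has hmax ih =>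
    simp only [coe_insert] at hu hs ⊢
    have hlt : ∀ x ∈ s, topBit (L (u x)) < topBit (L (u a)) := fun x hx =>
      (hmax x hx).lt_of_ne fun h =>
        has (hs (Set.mem_insert_of_mem _ hx) (Set.mem_insert a _) h ▸ hx)
    rw [linearIndepOn_insert (mod_cast has)]
    refine ⟨ih (fun x hx => hu x (Set.mem_insert_of_mem _ hx)) (hs.mono (Set.subset_insert _ _)),
      fun hspan => ?_⟩
    by_cases hLa : L (u a) = 0
    · -- `a` has the largest top bit, which is `topBit 0 = 0`
      obtain rfl : s = ∅ := eq_empty_of_forall_notMem fun x hx => by simpa [hLa] using hlt x hx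
      simp only [coe_empty, Set.image_empty, Submodule.span_empty, Submodule.mem_bot] at hspan
      exact hu a (Set.mem_insert a _) hspan
    · have hker : Submodule.span (ZMod 2) (u '' s) ≤
          LinearMap.ker ((LinearMap.proj ⟨topBit (L (u a)), topBit_lt hLa⟩).comp L) :=
        Submodule.span_le.2 <| by
          rintro _ ⟨x, hx, rfl⟩
          exact apply_eq_zero_of_topBit_lt (hlt x hx)
      exact apply_topBit_ne_zero hLa (hker hspan)

lemma two_pow_le_card_topBit_eq {j : ℕ} (hj : j < t) :
    2 ^ j ≤ #{w : Fin t → ZMod 2 | topBit w = j} := by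
  have hlt : ∀ b ∈ Finset.Ico (2 ^ j) (2 ^ (j + 1)), b < 2 ^ t := fun b hb =>
    (Finset.mem_Ico.1 hb).2.trans_le (Nat.pow_le_pow_right two_pos hj)
  let e : ℕ → Fin t → ZMod 2 := fun b =>
    (finFunctionFinEquiv (m := 2)).symm ⟨b % 2 ^ t, Nat.mod_lt _ (by positivity)⟩
  have he : ∀ b ∈ Finset.Ico (2 ^ j) (2 ^ (j + 1)), binVal (e b) = b := fun b hb => by
    rw [binVal_eq_finFunctionFinEquiv, Equiv.apply_symm_apply]
    exact Nat.mod_eq_of_lt (hlt b hb)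
  calc 2 ^ j = #(Finset.Ico (2 ^ j) (2 ^ (j + 1))) := by rw [Nat.card_Ico, pow_succ]; omega
    _ ≤ _ := card_le_card_of_injOn e (fun b hb => by
        have hb' := Finset.mem_Ico.1 hb
        have hb0 : b ≠ 0 := Nat.pos_iff_ne_zero.1 (Nat.one_le_two_pow.trans hb'.1)
        have : Nat.log 2 b = j := (Nat.log_eq_iff (Or.inr ⟨one_lt_two, hb0⟩)).2 hb'
        rw [coe_filter]
        exact ⟨Finset.mem_univ _, by rw [topBit, he b hb, this]⟩)
      (fun b hb b' hb' h => by rw [← he b hb, ← he b' hb', h])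

lemma card_topBit_ne_le {j : ℕ} (hj : j < t) :
    #{w : Fin t → ZMod 2 | topBit w ≠ j} ≤ 2 ^ t - 2 ^ j := by
  have h := card_filter_add_card_filter_not (s := (univ : Finset (Fin t → ZMod 2))) (topBit · = j)
  rw [card_univ, Fintype.card_fun, ZMod.card, Fintype.card_fin] at h
  have := two_pow_le_card_topBit_eq hj
  simp only [ne_eq] at h ⊢
  omega

end TopBit

section Families

variable {ι : Type*} [Fintype ι] {t : ℕ}

def topBits (w : ι → Fin t → ZMod 2) : Finset ℕ := univ.image fun i => topBit (w i)

lemma mem_topBits {w : ι → Fin t → ZMod 2} {j : ℕ} : j ∈ topBits w ↔ ∃ i, topBit (w i) = j := by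
  simp [topBits]

variable [DecidableEq ι]

lemma two_mul_card_forall_topBit_ne_le {j : ℕ} (hj : j < t) (hr : 2 ^ (t - j) ≤ Fintype.card ι) :
    2 * #{w : ι → Fin t → ZMod 2 | ∀ i, topBit (w i) ≠ j} ≤ (2 ^ t) ^ Fintype.card ι := by
  have hpi : ({w : ι → Fin t → ZMod 2 | ∀ i, topBit (w i) ≠ j} : Finset _) =
      Fintype.piFinset fun _ => {v | topBit v ≠ j} := by
    ext w; simp
  have hsplit : 2 ^ t = 2 ^ j * 2 ^ (t - j) := by rw [← pow_add, Nat.add_sub_cancel' hj.le]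
  have hsub : 2 ^ t - 2 ^ j = 2 ^ j * (2 ^ (t - j) - 1) := by
    rw [Nat.mul_sub, mul_one, ← hsplit]
  have hbern := two_mul_pow_le_succ_pow (p := 2 ^ (t - j) - 1) (r := Fintype.card ι)
    (by have := @Nat.one_le_two_pow (t - j); omega)
  rw [Nat.sub_add_cancel Nat.one_le_two_pow] at hbern
  calc 2 * #{w : ι → Fin t → ZMod 2 | ∀ i, topBit (w i) ≠ j}
      ≤ 2 * (2 ^ t - 2 ^ j) ^ Fintype.card ι := by
        rw [hpi, Fintype.card_piFinset, prod_const, card_univ]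
        exact Nat.mul_le_mul_left _ (Nat.pow_le_pow_left (card_topBit_ne_le hj) _)
    _ ≤ (2 ^ t) ^ Fintype.card ι := by
        rw [hsub, hsplit, mul_pow, mul_pow, mul_left_comm]
        exact Nat.mul_le_mul_left _ hbern

lemma card_fun_fin_zmod_two : Fintype.card (ι → Fin t → ZMod 2) = (2 ^ t) ^ Fintype.card ι := by
  simp only [Fintype.card_fun, ZMod.card, Fintype.card_fin]

lemma le_two_mul_card_exists_topBit_eq {j : ℕ} (hj : j < t) (hr : 2 ^ (t - j) ≤ Fintype.card ι) :
    (2 ^ t) ^ Fintype.card ι ≤ 2 * #{w : ι → Fin t → ZMod 2 | ∃ i, topBit (w i) = j} := by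
  have h := card_filter_add_card_filter_not (s := (univ : Finset (ι → Fin t → ZMod 2)))
    (fun w : ι → Fin t → ZMod 2 => ∃ i, topBit (w i) = j)
  rw [card_univ, card_fun_fin_zmod_two] at h
  simp only [not_exists, ← ne_eq] at h
  have := two_mul_card_forall_topBit_ne_le hj hr
  omega

lemma max_one_log_mul_le_sum_card_topBits [Nonempty ι] (h : Nat.log 2 (Fintype.card ι) ≤ t) :
    max 1 (Nat.log 2 (Fintype.card ι)) * (2 ^ t) ^ Fintype.card ι ≤
      2 * ∑ w : ι → Fin t → ZMod 2, #(topBits w) := by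
  set a := Nat.log 2 (Fintype.card ι)
  have hcard : 2 ^ a ≤ Fintype.card ι := Nat.pow_log_le_self 2 Fintype.card_ne_zero
  have hone : (2 ^ t) ^ Fintype.card ι ≤ ∑ w : ι → Fin t → ZMod 2, #(topBits w) := by
    rw [← card_fun_fin_zmod_two, ← card_univ, card_eq_sum_ones]
    exact sum_le_sum fun w _ => card_pos.2 (univ_nonempty.image _)
  have hlog : a * (2 ^ t) ^ Fintype.card ι ≤ 2 * ∑ w : ι → Fin t → ZMod 2, #(topBits w) :=
    calc a * (2 ^ t) ^ Fintype.card ι = ∑ _j ∈ Finset.Ico (t - a) t, (2 ^ t) ^ Fintype.card ι := by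
          rw [sum_const, Nat.card_Ico, smul_eq_mul, Nat.sub_sub_self h]
      _ ≤ ∑ j ∈ Finset.Ico (t - a) t, 2 * #{w : ι → Fin t → ZMod 2 | j ∈ topBits w} := by
          refine sum_le_sum fun j hj => ?_
          have hj := Finset.mem_Ico.1 hj
          simp only [mem_topBits]
          exact le_two_mul_card_exists_topBit_eq hj.2
            ((Nat.pow_le_pow_right two_pos (by omega)).trans hcard)
      _ = 2 * ∑ w : ι → Fin t → ZMod 2, #{j ∈ Finset.Ico (t - a) t | j ∈ topBits w} := by
          simp only [← mul_sum, card_filter]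
          rw [sum_comm]
      _ ≤ 2 * ∑ w : ι → Fin t → ZMod 2, #(topBits w) :=
          Nat.mul_le_mul_left _ (sum_le_sum fun w _ => card_le_card fun j hj => (mem_filter.1 hj).2)
  rcases le_total a 1 with ha | ha
  · rw [max_eq_left ha]; omega
  · rw [max_eq_right ha]; exact hlog

end Families

section Embedding

variable {α : Type*} {m n t : ℕ}

def topBitEmbedding (ψ : α → Fin m → ZMod 2) (htn : 2 ^ t ≤ n)
    (L : Matrix (Fin t) (Fin m) (ZMod 2)) (x : α) : Fin n :=
  ⟨topBit (L *ᵥ ψ x), (topBit_lt_two_pow _).trans_le htn⟩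

variable {M : Matroid α} {ψ : α → Fin m → ZMod 2}

lemma encard_image_topBitEmbedding_le (hψ : ∀ I ⊆ M.E, M.Indep I ↔ LinearIndepOn (ZMod 2) ψ I)
    (hψ0 : ∀ x ∈ M.E, ψ x ≠ 0) (htn : 2 ^ t ≤ n) (L : Matrix (Fin t) (Fin m) (ZMod 2))
    {S : Set α} (hS : S ⊆ M.E) : (topBitEmbedding ψ htn L '' S).encard ≤ M.eRk S := by
  obtain ⟨R, hRS, hbij⟩ := Set.exists_subset_bijOn S (topBitEmbedding ψ htn L)
  have hRfin : R.Finite := Set.Finite.of_finite_image (hbij.image_eq ▸ Set.toFinite _) hbij.injOn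
  have hR : M.Indep R := (hψ R (hRS.trans hS)).2 <|
    linearIndepOn_of_injOn_topBit (Matrix.mulVecLin L) hRfin (fun x hx => hψ0 x (hS (hRS hx)))
      fun x hx y hy h => hbij.injOn hx hy (Fin.ext h)
  rw [← hbij.image_eq, hbij.injOn.encard_image]
  exact hR.encard_le_eRk_of_subset hRS

lemma card_mul_max_one_log_le_two_mul_sum_ncard
    (hψ : ∀ I ⊆ M.E, M.Indep I ↔ LinearIndepOn (ZMod 2) ψ I) (htn : 2 ^ t ≤ n) {I S : Set α}
    (hIS : I ⊆ S) (hI : M.Indep I) (hIfin : I.Finite) (hne : I.Nonempty)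
    (hlog : Nat.log 2 I.ncard ≤ t) :
    Fintype.card (Matrix (Fin t) (Fin m) (ZMod 2)) * max 1 (Nat.log 2 I.ncard) ≤
      2 * ∑ L, (topBitEmbedding ψ htn L '' S).ncard := by
  classical
  have := hIfin.fintype
  have := hne.to_subtype
  have hcardI : Fintype.card I = I.ncard := by
    rw [← Nat.card_eq_fintype_card, Nat.card_coe_set_eq]
  let T : Matrix (Fin t) (Fin m) (ZMod 2) →+ (I → Fin t → ZMod 2) :=
    { toFun := fun L x => L *ᵥ ψ x
      map_zero' := by ext; simp
      map_add' := fun L L' => by ext; simp [add_mulVec] }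
  have hT : Function.Surjective T :=
    mulVec_surjective_of_linearIndependent ((hψ I hI.subset_ground).1 hI)
  have hle : ∀ L, #(topBits (T L)) ≤ (topBitEmbedding ψ htn L '' S).ncard := fun L =>
    calc #(topBits (T L)) = (Fin.val '' (topBitEmbedding ψ htn L '' I)).ncard := by
          rw [← Set.ncard_coe_finset]
          congr 1
          ext j
          simp [topBits, T, topBitEmbedding]
      _ ≤ (Fin.val '' (topBitEmbedding ψ htn L '' S)).ncard :=
          Set.ncard_le_ncard (image_mono (image_mono hIS)) ((Set.toFinite _).image _)
      _ = (topBitEmbedding ψ htn L '' S).ncard := Set.ncard_image_of_injective _ Fin.val_injective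
  have hfib := AddMonoidHom.sum_comp_mul_card_eq hT fun w => #(topBits w)
  have hcount := max_one_log_mul_le_sum_card_topBits (ι := I) (t := t) (hcardI ▸ hlog)
  rw [card_fun_fin_zmod_two] at hfib
  rw [hcardI] at hfib hcount
  refine Nat.le_of_mul_le_mul_right ?_ (pow_pos (pow_pos two_pos t) I.ncard)
  calc _ = Fintype.card (Matrix (Fin t) (Fin m) (ZMod 2)) *
        (max 1 (Nat.log 2 I.ncard) * (2 ^ t) ^ I.ncard) := by ring
    _ ≤ Fintype.card (Matrix (Fin t) (Fin m) (ZMod 2)) *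
        (2 * ∑ w : I → Fin t → ZMod 2, #(topBits w)) := by gcongr
    _ = 2 * ((∑ L, #(topBits (T L))) * (2 ^ t) ^ I.ncard) := by rw [hfib]; ring
    _ ≤ 2 * (∑ L, (topBitEmbedding ψ htn L '' S).ncard) * (2 ^ t) ^ I.ncard := by
        rw [mul_assoc]; gcongr with L; exact hle L

lemma logb_div_mul_toNat_eRk_le_sum_ncard_div
    (hψ : ∀ I ⊆ M.E, M.Indep I ↔ LinearIndepOn (ZMod 2) ψ I) (hn : 2 ≤ n)
    (htn : 2 ^ Nat.log 2 n ≤ n) (hrank : M.eRank = n) (S : Set α) :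
    Real.logb 2 n / (8 * n) * (M.eRk S).toNat ≤
      (∑ L, ((topBitEmbedding ψ htn L '' S).ncard : ℝ)) /
        Fintype.card (Matrix (Fin (Nat.log 2 n)) (Fin m) (ZMod 2)) := by
  obtain ⟨I, hI⟩ := M.exists_isBasis' S
  have hIn : I.encard ≤ n := hrank ▸ hI.indep.encard_le_eRank
  have hIfin : I.Finite := Set.finite_of_encard_le_coe hIn
  have hrn : I.ncard ≤ n := by
    rw [← hIfin.cast_ncard_eq] at hIn
    exact_mod_cast hIn
  rw [← hI.encard_eq_eRk, ← Set.ncard_def]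
  rcases I.eq_empty_or_nonempty with rfl | hne
  · simp only [Set.ncard_empty, CharP.cast_eq_zero, mul_zero]
    positivity
  · rw [← Nat.cast_sum]
    exact logb_div_mul_le_div hn ((Set.ncard_pos hIfin).2 hne) hrn Fintype.card_pos
      (card_mul_max_one_log_le_two_mul_sum_ncard hψ htn hI.subset hI.indep hIfin hne
        (Nat.log_mono_right hrn))

end Embedding

/-- There is a constant `C > 0` such that every loopless `𝔽₂`-representable matroid `M` of
rank `n ≥ 2` admits an `O(n / log n)`-approximate randomized embedding into the free matroid
on `n` elements: a nonempty finite family of maps `f i : α → Fin n` such that (i) for every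
`i` and every set `S` of elements, the number of distinct values of `f i` on `S` is at most
the rank of `S`, and (ii) for every set `S` of elements the average over `i` of the number
of distinct values of `f i` on `S` is at least `(log₂ n / (C n)) · rank S`. -/
theorem stmt19 : ∃ C : ℝ, 0 < C ∧ ∀ n : ℕ, 2 ≤ n → ∀ (α : Type*) (M : Matroid α),
    (∀ x ∈ M.E, M.Indep {x}) → RepOver (ZMod 2) M → mRank M M.E = (n : ℕ∞) →
    ∃ k : ℕ, 0 < k ∧ ∃ f : Fin k → (α → Fin n),
      (∀ (i : Fin k) (S : Set α), S ⊆ M.E → ((f i '' S).encard ≤ mRank M S)) ∧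
      (∀ S : Set α, S ⊆ M.E →
        Real.logb 2 n / (C * n) * ((mRank M S).toNat : ℝ) ≤
          (∑ i : Fin k, ((f i '' S).ncard : ℝ)) / (k : ℝ)) := by
  refine ⟨8, by norm_num, fun n hn α M hloop hrep hrank => ?_⟩
  simp only [mRank_eq_eRk, Matroid.eRk_ground] at hrank ⊢
  have : M.RankFinite := M.eRank_ne_top_iff.1 (by simp [hrank])
  obtain ⟨m, ψ, hψ⟩ := hrep.exists_fin_rep
  have hψ0 : ∀ x ∈ M.E, ψ x ≠ 0 := fun x hx =>
    (linearIndepOn_singleton_iff _).1 ((hψ {x} (singleton_subset_iff.2 hx)).1 (hloop x hx))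
  have htn : 2 ^ Nat.log 2 n ≤ n := Nat.pow_log_le_self 2 (by omega)
  let e := Fintype.equivFin (Matrix (Fin (Nat.log 2 n)) (Fin m) (ZMod 2))
  refine ⟨_, Fintype.card_pos, fun i => topBitEmbedding ψ htn (e.symm i),
    fun i S hS => encard_image_topBitEmbedding_le hψ hψ0 htn _ hS, fun S _ => ?_⟩
  rw [Equiv.sum_comp e.symm fun L => ((topBitEmbedding ψ htn L '' S).ncard : ℝ)]
  exact logb_div_mul_toNat_eRk_le_sum_ncard_div hψ hn htn hrank S
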